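/- For every integer n ≥ 1 and every permutation σ of {1,…,n}, the images of the monomials x_{σ(1)}^{a_1}·x_{σ(2)}^{a_2}⋯x_{σ(n−1)}^{a_{n−1}} with 0 ≤ a_i ≤ n−i for each 1 ≤ i ≤ n−1 form a basis of the quotient ring ℤ[x_1,…,x_n]/(h_1,…,h_n) as a ℤ-module. -/

import Mathlib

open MvPolynomial

/-- `hpoly n a b` is the sum of all monomials of degree `a` in the first `b`
variables `x_1, …, x_b` of `ℤ[x_1,…,x_n]`: the complete homogeneous symmetric
polynomial `h_a^b`; `h_a = hpoly n a n`. -/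
noncomputable def hpoly (n a b : ℕ) : MvPolynomial (Fin n) ℤ :=
  ∑ μ ∈ Finset.univ.filter (fun μ : Sym (Fin n) a => ∀ i ∈ μ.1, (i : ℕ) < b),
    (μ.1.map X).prod

/-!
Write `I(k, m) = (h_{k+1}, …, h_{k+m})` in the variables `x_0, …, x_{m-1}`. Splitting off `x_0`
gives `h_{a+1} = x_0 h_a + h_{a+1}(x_1, …)`, so `I(k, m + 1)` is generated by `h_{k+1}`, which is
monic of degree `k + 1` in `x_0`, together with `I(k + 1, m)` in the remaining variables. Hence
`R[x_0, …, x_m] / I(k, m + 1)` is `(R[x_1, …, x_m] / I(k + 1, m))[x_0]` modulo a monic polynomial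
of degree `k + 1`, and induction on `m` shows that the monomials whose `x_j`-exponent is at most
`j + k` form a basis. The `h_a` are symmetric, so the variables may be ordered arbitrarily; the
theorem is the case `k = 0` with the variables ordered as `σ(n), …, σ(1)`.
-/

namespace Ideal

theorem span_image_Icc_eq_span_insert {A : Type*} [CommRing A] {H T : ℕ → A} (x : A)
    (hHT : ∀ a, H (a + 1) = x * H a + T (a + 1)) {p q : ℕ} (hpq : p ≤ q) :
    span (H '' Set.Icc p q) = span (insert (H p) (T '' Set.Icc (p + 1) q)) := by
  apply le_antisymm <;> rw [span_le]
  · rintro _ ⟨a, ⟨hpa, haq⟩, rfl⟩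
    induction a, hpa using Nat.le_induction with
    | base => exact subset_span (Set.mem_insert _ _)
    | succ a hpa ih =>
      rw [hHT]
      exact add_mem (mul_mem_left _ _ (ih (by omega)))
        (subset_span (Set.mem_insert_of_mem _ ⟨a + 1, ⟨by omega, haq⟩, rfl⟩))
  · rintro _ (rfl | ⟨a, ⟨hpa, haq⟩, rfl⟩)
    · exact subset_span ⟨p, ⟨le_rfl, hpq⟩, rfl⟩
    · obtain ⟨b, rfl⟩ : ∃ b, a = b + 1 := ⟨a - 1, by omega⟩
      rw [SetLike.mem_coe, eq_sub_of_add_eq' (hHT b).symm]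
      exact sub_mem (subset_span ⟨b + 1, ⟨by omega, haq⟩, rfl⟩)
        (mul_mem_left _ _ (subset_span ⟨b, ⟨by omega, by omega⟩, rfl⟩))

end Ideal

namespace Polynomial

variable {R A : Type*} [CommRing R] [CommRing A] [Algebra R A]

theorem ker_mk_comp_mapRingHom (I : Ideal A) (f : A[X]) :
    RingHom.ker ((AdjoinRoot.mk (f.map (Ideal.Quotient.mk I))).comp
      (mapRingHom (Ideal.Quotient.mk I))) = I.map C ⊔ Ideal.span {f} := by
  have hker : RingHom.ker (AdjoinRoot.mk (f.map (Ideal.Quotient.mk I))) =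
      Ideal.span {f.map (Ideal.Quotient.mk I)} := Ideal.mk_ker
  rw [← RingHom.comap_ker, hker, ← coe_mapRingHom, ← Set.image_singleton, ← Ideal.map_span,
    Ideal.comap_map_of_surjective' _ (map_surjective _ Ideal.Quotient.mk_surjective),
    ker_mapRingHom, Ideal.mk_ker, sup_comm]

noncomputable def quotientMapCSupSpanEquiv (I : Ideal A) (f : A[X]) :
    A[X] ⧸ (I.map C ⊔ Ideal.span {f}) ≃+* AdjoinRoot (f.map (Ideal.Quotient.mk I)) :=
  (Ideal.quotEquivOfEq (ker_mk_comp_mapRingHom I f).symm).trans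
    (RingHom.quotientKerEquivOfSurjective
      (AdjoinRoot.mk_surjective.comp (map_surjective _ Ideal.Quotient.mk_surjective)))

theorem quotientMapCSupSpanEquiv_mk (I : Ideal A) (f p : A[X]) :
    quotientMapCSupSpanEquiv I f (Ideal.Quotient.mk _ p) =
      AdjoinRoot.mk _ (p.map (Ideal.Quotient.mk I)) :=
  rfl

variable (R) in
noncomputable def quotientMapCSupSpanAlgEquiv (I : Ideal A) (f : A[X]) :
    (A[X] ⧸ (I.map C ⊔ Ideal.span {f})) ≃ₐ[R] AdjoinRoot (f.map (Ideal.Quotient.mk I)) :=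
  AlgEquiv.ofRingEquiv (f := quotientMapCSupSpanEquiv I f) fun r => by
    rw [← Ideal.Quotient.mk_algebraMap, quotientMapCSupSpanEquiv_mk, algebraMap_apply, map_C,
      AdjoinRoot.mk_C, AdjoinRoot.algebraMap_eq', RingHom.comp_apply, Ideal.Quotient.mk_algebraMap]

theorem exists_basis_quotient_map_C_sup_span {ι : Type*} (I : Ideal A) [Nontrivial (A ⧸ I)]
    (b : Module.Basis ι R (A ⧸ I)) (v : ι → A) (hv : ∀ i, b i = Ideal.Quotient.mk I (v i))
    {f : A[X]} (hf : f.Monic) :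
    ∃ B : Module.Basis (ι × Fin f.natDegree) R (A[X] ⧸ (I.map C ⊔ Ideal.span {f})),
      ∀ i j, B (i, j) = Ideal.Quotient.mk _ (C (v i) * X ^ (j : ℕ)) := by
  let pb := AdjoinRoot.powerBasis' (hf.map (Ideal.Quotient.mk I))
  have hdim : pb.dim = f.natDegree := hf.natDegree_map _
  let Φ := quotientMapCSupSpanAlgEquiv R I f
  refine ⟨((b.smulTower pb.basis).map Φ.symm.toLinearEquiv).reindex
    ((Equiv.refl ι).prodCongr (finCongr hdim)), fun i j => Φ.injective ?_⟩
  simp [Φ, pb, hv, quotientMapCSupSpanAlgEquiv, quotientMapCSupSpanEquiv_mk, Algebra.smul_def,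
    AdjoinRoot.algebraMap_eq, AdjoinRoot.mk_X, AdjoinRoot.mk_C]

end Polynomial

namespace MvPolynomial

section Semiring

variable (σ R : Type*) [CommSemiring R]

theorem optionEquivLeft_rename_some (p : MvPolynomial σ R) :
    optionEquivLeft R σ (rename some p) = Polynomial.C p := by
  induction p using MvPolynomial.induction_on <;> simp_all [optionEquivLeft_X_some]

variable [Fintype σ] [DecidableEq σ]

theorem hsymm_option_succ (n : ℕ) :
    hsymm (Option σ) R (n + 1) =
      X none * hsymm (Option σ) R n + rename some (hsymm σ R (n + 1)) := by
  rw [hsymm, ← Equiv.sum_comp (symOptionSuccEquiv (α := σ) (n := n)).symm, Fintype.sum_sum_type,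
    hsymm, hsymm, Finset.mul_sum, map_sum]
  congr 1 <;> refine Finset.sum_congr rfl fun s _ => ?_
  · simp [symOptionSuccEquiv, Sym.coe_cons]
  · simp [symOptionSuccEquiv, map_multiset_prod, Multiset.map_map]

theorem optionEquivLeft_hsymm_succ (n : ℕ) :
    optionEquivLeft R σ (hsymm (Option σ) R (n + 1)) =
      Polynomial.X * optionEquivLeft R σ (hsymm (Option σ) R n) +
        Polynomial.C (hsymm σ R (n + 1)) := by
  rw [hsymm_option_succ, map_add, map_mul, optionEquivLeft_X_none, optionEquivLeft_rename_some]

theorem monic_optionEquivLeft_hsymm (n : ℕ) :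
    (optionEquivLeft R σ (hsymm (Option σ) R n)).Monic := by
  nontriviality R
  induction n with
  | zero => simp
  | succ n ih =>
    rw [optionEquivLeft_hsymm_succ]
    refine (Polynomial.monic_X.mul ih).add_of_left (Polynomial.degree_C_le.trans_lt ?_)
    rw [← Polynomial.natDegree_pos_iff_degree_pos, Polynomial.natDegree_X_mul ih.ne_zero]
    omega

theorem natDegree_optionEquivLeft_hsymm [Nontrivial R] (n : ℕ) :
    (optionEquivLeft R σ (hsymm (Option σ) R n)).natDegree = n := by
  induction n with
  | zero => simp
  | succ n ih =>
    rw [optionEquivLeft_hsymm_succ, Polynomial.natDegree_add_C,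
      Polynomial.natDegree_X_mul (monic_optionEquivLeft_hsymm σ R n).ne_zero, ih]

theorem finSuccEquiv_hsymm (m n : ℕ) :
    finSuccEquiv R m (hsymm (Fin (m + 1)) R n) =
      optionEquivLeft R (Fin m) (hsymm (Option (Fin m)) R n) := by
  rw [finSuccEquiv, AlgEquiv.trans_apply, renameEquiv_apply, rename_hsymm]

theorem finSuccEquiv_prod_X_pow (m : ℕ) (a : Fin (m + 1) → ℕ) :
    finSuccEquiv R m (∏ j, X j ^ a j) =
      Polynomial.C (∏ j : Fin m, X j ^ a j.succ) * Polynomial.X ^ a 0 := by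
  simp [Fin.prod_univ_succ, map_prod, finSuccEquiv_X_zero, finSuccEquiv_X_succ, mul_comm]

noncomputable def hsymmIdeal (k m : ℕ) : Ideal (MvPolynomial σ R) :=
  Ideal.span (hsymm σ R '' Set.Icc (k + 1) (m + k))

end Semiring

variable {R : Type*} [CommRing R]

theorem map_finSuccEquiv_hsymmIdeal (m k : ℕ) :
    (hsymmIdeal (Fin (m + 1)) R k (m + 1)).map (finSuccEquiv R m) =
      (hsymmIdeal (Fin m) R (k + 1) m).map Polynomial.C ⊔
        Ideal.span {finSuccEquiv R m (hsymm (Fin (m + 1)) R (k + 1))} := by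
  have hrec (a : ℕ) : finSuccEquiv R m (hsymm (Fin (m + 1)) R (a + 1)) =
      Polynomial.X * finSuccEquiv R m (hsymm (Fin (m + 1)) R a) +
        Polynomial.C (hsymm (Fin m) R (a + 1)) := by
    simp only [finSuccEquiv_hsymm, optionEquivLeft_hsymm_succ]
  rw [hsymmIdeal, hsymmIdeal, Ideal.map_span, Ideal.map_span, Set.image_image, Set.image_image,
    Nat.add_right_comm,
    Ideal.span_image_Icc_eq_span_insert (H := fun a => finSuccEquiv R m (hsymm (Fin (m + 1)) R a))
      (T := fun a => Polynomial.C (hsymm (Fin m) R a)) _ hrec (by omega),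
    Ideal.span_insert, sup_comm]
  rfl

end MvPolynomial

def boundedExponentsSuccEquiv (m k : ℕ) :
    {a : Fin m → ℕ // ∀ j, a j ≤ j + (k + 1)} × Fin (k + 1) ≃
      {a : Fin (m + 1) → ℕ // ∀ j, a j ≤ j + k} where
  toFun p := ⟨Fin.cons (p.2 : ℕ) p.1.1, Fin.cases (by simp [Nat.lt_succ_iff.mp p.2.2])
    fun j => by have := p.1.2 j; simp only [Fin.cons_succ, Fin.val_succ]; omega⟩
  invFun a := (⟨Fin.tail a.1, fun j => by
      have := a.2 j.succ; simp only [Fin.val_succ] at this; exact this.trans (by omega)⟩,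
    ⟨a.1 0, by simpa [Nat.lt_succ_iff] using a.2 0⟩)
  left_inv p := by ext <;> simp
  right_inv a := by ext j; cases j using Fin.cases <;> simp [Fin.tail]

def boundedExponentsRevEquiv (m : ℕ) :
    {a : Fin (m + 1) → ℕ // ∀ j, a j ≤ j} ≃ {a : Fin m → ℕ // ∀ i, a i ≤ m - i} where
  toFun a := ⟨fun i => a.1 (Fin.rev i).succ, fun i => by
    have := a.2 (Fin.rev i).succ; simp only [Fin.val_succ, Fin.val_rev] at this ⊢; omega⟩
  invFun a := ⟨Fin.cons 0 fun i => a.1 (Fin.rev i), Fin.cases (by simp) fun i => by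
    have := a.2 (Fin.rev i); simp only [Fin.cons_succ, Fin.val_succ, Fin.val_rev] at this ⊢; omega⟩
  left_inv a := by
    ext j
    cases j using Fin.cases
    · simpa using (Nat.le_zero.mp (a.2 0)).symm
    · simp
  right_inv a := by ext i; simp

theorem prod_pow_boundedExponentsRevEquiv_symm {M : Type*} [CommMonoid M] {m : ℕ}
    (x : Fin (m + 1) → M) (a : {a : Fin m → ℕ // ∀ i, a i ≤ m - i}) :
    ∏ j, x (Fin.rev j) ^ ((boundedExponentsRevEquiv m).symm a).1 j =
      ∏ i, x (Fin.castSucc i) ^ a.1 i := by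
  rw [Fin.prod_univ_succ, ← Equiv.prod_comp (Fin.revPerm (n := m))]
  simp [boundedExponentsRevEquiv, Fin.rev_succ]

namespace MvPolynomial

variable {R : Type*} [CommRing R] [Nontrivial R]

theorem exists_basis_quotient_hsymmIdeal_fin (m k : ℕ) :
    ∃ b : Module.Basis {a : Fin m → ℕ // ∀ j, a j ≤ j + k} R
        (MvPolynomial (Fin m) R ⧸ hsymmIdeal (Fin m) R k m),
      ∀ a, b a = Ideal.Quotient.mk _ (∏ j, X j ^ a.1 j) := by
  induction m generalizing k with
  | zero =>
    have hbot : hsymmIdeal (Fin 0) R k 0 = ⊥ := by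
      rw [hsymmIdeal, Set.Icc_eq_empty (by omega), Set.image_empty, Ideal.span_empty]
    let e := (Ideal.quotientEquivAlgOfEq R hbot).trans
      ((AlgEquiv.quotientBot R _).trans (isEmptyAlgEquiv R (Fin 0)))
    have : Unique {a : Fin 0 → ℕ // ∀ j, a j ≤ j + k} :=
      { default := ⟨finZeroElim, finZeroElim⟩
        uniq := fun _ => Subtype.ext (Subsingleton.elim _ _) }
    refine ⟨(Module.Basis.singleton _ R).map e.symm.toLinearEquiv, fun a => ?_⟩
    simp
  | succ m ih =>
    obtain ⟨b, hb⟩ := ih (k + 1)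
    have : Nontrivial (MvPolynomial (Fin m) R ⧸ hsymmIdeal (Fin m) R (k + 1) m) :=
      nontrivial_of_ne _ _ (b.ne_zero ⟨0, fun _ => Nat.zero_le _⟩)
    have hf := monic_optionEquivLeft_hsymm (Fin m) R (k + 1)
    rw [← finSuccEquiv_hsymm] at hf
    obtain ⟨B, hB⟩ := Polynomial.exists_basis_quotient_map_C_sup_span _ b _ hb hf
    have hdeg : (finSuccEquiv R m (hsymm (Fin (m + 1)) R (k + 1))).natDegree = k + 1 := by
      rw [finSuccEquiv_hsymm, natDegree_optionEquivLeft_hsymm]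
    let e := Ideal.quotientEquivAlg _ _ (finSuccEquiv R m) (map_finSuccEquiv_hsymmIdeal m k).symm
    refine ⟨(B.map e.symm.toLinearEquiv).reindex (((Equiv.refl _).prodCongr (finCongr hdeg)).trans
      (boundedExponentsSuccEquiv m k)), fun a => ?_⟩
    rw [Module.Basis.reindex_apply, Module.Basis.map_apply, AlgEquiv.toLinearEquiv_apply,
      AlgEquiv.symm_apply_eq]
    obtain ⟨⟨i, j⟩, rfl⟩ := (boundedExponentsSuccEquiv m k).surjective a
    rw [Equiv.symm_trans_apply, Equiv.symm_apply_apply, Equiv.prodCongr_symm, Equiv.prodCongr_apply,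
      hB]
    change _ = Ideal.Quotient.mk _ (finSuccEquiv R m _)
    rw [finSuccEquiv_prod_X_pow]
    rfl

theorem exists_basis_quotient_hsymmIdeal {σ : Type*} [Fintype σ] [DecidableEq σ] {m : ℕ}
    (e : Fin m ≃ σ) (k : ℕ) :
    ∃ b : Module.Basis {a : Fin m → ℕ // ∀ j, a j ≤ j + k} R
        (MvPolynomial σ R ⧸ hsymmIdeal σ R k m),
      ∀ a, b a = Ideal.Quotient.mk _ (∏ j, X (e j) ^ a.1 j) := by
  obtain ⟨b, hb⟩ := exists_basis_quotient_hsymmIdeal_fin (R := R) m k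
  have hmap : hsymmIdeal σ R k m = (hsymmIdeal (Fin m) R k m).map (renameEquiv R e) := by
    simp [hsymmIdeal, Ideal.map_span, Set.image_image, rename_hsymm]
  refine ⟨b.map (Ideal.quotientEquivAlg _ _ (renameEquiv R e) hmap).toLinearEquiv, fun a => ?_⟩
  rw [Module.Basis.map_apply, hb, AlgEquiv.toLinearEquiv_apply]
  change Ideal.Quotient.mk _ (rename e _) = _
  simp [map_prod, rename_X]

end MvPolynomial

theorem hpoly_eq_hsymm (n a : ℕ) : hpoly n a n = hsymm (Fin n) ℤ a := by
  rw [hpoly, hsymm, Finset.filter_true_of_mem fun μ _ i _ => i.isLt]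

/-- For every `n ≥ 1` and every permutation `σ` of the variables, the images of the
monomials `x_{σ(1)}^{a_1}⋯x_{σ(n−1)}^{a_{n−1}}` with `0 ≤ a_i ≤ n−i` form a
`ℤ`-basis of `ℤ[x_1,…,x_n]/(h_1,…,h_n)`. -/
theorem basis_quotient_hsymm_perm (n : ℕ) (hn : 1 ≤ n) (σ : Equiv.Perm (Fin n)) :
    ∃ b : Module.Basis {a : Fin (n - 1) → ℕ // ∀ i : Fin (n - 1), a i ≤ n - 1 - (i : ℕ)} ℤ
        (MvPolynomial (Fin n) ℤ ⧸ Ideal.span ((fun a => hpoly n a n) '' Set.Icc 1 n)),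
      ∀ a, b a = Ideal.Quotient.mk _
        (∏ i : Fin (n - 1), X (σ (Fin.castLE (Nat.sub_le n 1) i)) ^ a.1 i) := by
  obtain ⟨m, rfl⟩ : ∃ m, n = m + 1 := ⟨n - 1, by omega⟩
  obtain ⟨b, hb⟩ := exists_basis_quotient_hsymmIdeal (R := ℤ) (Fin.revPerm.trans σ) 0
  have hI : hsymmIdeal (Fin (m + 1)) ℤ 0 (m + 1) =
      Ideal.span ((fun a => hpoly (m + 1) a (m + 1)) '' Set.Icc 1 (m + 1)) := by
    simp only [hsymmIdeal, hpoly_eq_hsymm]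
  refine ⟨(b.map (Ideal.quotientEquivAlgOfEq ℤ hI).toLinearEquiv).reindex
    (boundedExponentsRevEquiv m), fun a => ?_⟩
  rw [Module.Basis.reindex_apply, Module.Basis.map_apply, hb, AlgEquiv.toLinearEquiv_apply,
    Ideal.quotientEquivAlgOfEq_mk]
  exact congrArg _ (prod_pow_boundedExponentsRevEquiv_symm (fun j => X (σ j)) a)
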